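/- Let n = 1, s ∈ (0,1), α ∈ (0,1), and let c > 0 be a fixed constant. There exist ε̄ = ε̄(α, s, c) > 0 and C_o = C_o(α, s, c) > 0 such that for every ε ∈ (0, ε̄) there exists d > 1/2 with the following properties: the set E := (0, 1/2) ∪ (d, d + 1/2) ⊂ ℝ satisfies the Euler–Lagrange equation κ_E(x) + c ε V_E(x) = λ for all x ∈ ∂E = {0, 1/2, d, d+1/2} and some λ ∈ ℝ; E has two connected components; and diam(E) = d + 1/2 ≥ C_o · ε^{−1/(1+s−α)}. In particular, the diameter of such critical points is not bounded uniformly in ε. -/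

import Mathlib

open MeasureTheory Set Filter Metric Bornology Topology

noncomputable section

/-- The Riesz potential `V_E(x) = ∫_E |x-y|^{-α} dy` of a set `E ⊆ ℝ`. -/
def rieszPot1 (α : ℝ) (E : Set ℝ) (x : ℝ) : ℝ :=
  ∫ y in E, |x - y| ^ (-α)

/-- `IsFracMeanCurv1 s E x κ` says that the principal value
`κ_E(x) = p.v. ∫ (χ_{ℝ∖E}(y) - χ_E(y)) |x-y|^{-(1+s)} dy` exists and equals `κ`. -/
def IsFracMeanCurv1 (s : ℝ) (E : Set ℝ) (x κ : ℝ) : Prop :=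
  Tendsto (fun δ : ℝ => ∫ y in {y : ℝ | δ < |x - y|},
      (Eᶜ.indicator (fun _ => (1 : ℝ)) y - E.indicator (fun _ => (1 : ℝ)) y)
        * |x - y| ^ (-(1 + s)))
    (𝓝[>] (0 : ℝ)) (𝓝 κ)

/-!
Write `χ_{Eᶜ} - χ_E = 1 - 2 χ_E`: the truncated curvature integral at `x` is the integral of
`|x - y|^{-(1+s)}` over `|x - y| > δ`, which is `2 δ^{-s} / s`, minus twice the integral over `E`.
At an endpoint of a component of `E` the divergent parts cancel exactly for small `δ`, so the
principal value exists and is explicit.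

With `Φ(t) = (2/s) t^{-s} + cε/(1-α) t^{1-α}`, whose derivative is the interaction kernel
`cε t^{-α} - 2 t^{-(1+s)}`, one finds `κ_E(x) + cε V_E(x) = Φ(1/2) + Φ(far) - Φ(near)` at each
boundary point of `E = (0, 1/2) ∪ (d, d + 1/2)`, where `near`, `far` are the distances from `x` to
the endpoints of the other component: `d, d + 1/2` for `x ∈ {0, d + 1/2}` and `d - 1/2, d` for
`x ∈ {1/2, d}`. So the Euler–Lagrange equation says `Φ(d + 1/2) - 2 Φ(d) + Φ(d - 1/2) = 0`.
This second difference is `Φ''(η) / 4` for some `η ∈ (d - 1/2, d + 1/2)`, and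
`Φ''(t) = t^{-(2+s)} (2(1+s) - cεα t^{1+s-α})` changes sign only at
`t₀ = (2(1+s) / (cεα))^{1/(1+s-α)}`; the intermediate value theorem on `[t₀ - 1/2, t₀ + 1/2]`
gives a root `d` with `d + 1/2 ≥ t₀`, a constant multiple of `ε^{-1/(1+s-α)}`.
-/

lemma integrableOn_and_integral_abs_sub_rpow_of_lt_abs_sub {p x δ : ℝ} (hp : p < -1)
    (hδ : 0 < δ) :
    IntegrableOn (fun y => |x - y| ^ p) {y | δ < |x - y|} ∧
      ∫ y in {y | δ < |x - y|}, |x - y| ^ p = -2 * δ ^ (p + 1) / (p + 1) := by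
  set h := (Ioi δ).indicator fun t : ℝ => t ^ p
  have hh : Integrable h :=
    (integrable_indicator_iff measurableSet_Ioi).2 (integrableOn_Ioi_rpow_of_lt hp hδ)
  -- the two halves of `{y | δ < |x - y|}` are a translate of `Ioi δ` and of its reflection
  have hsplit : {y | δ < |x - y|}.indicator (fun y => |x - y| ^ p) =
      fun y => h (y - x) + h (x - y) := by
    ext y
    rcases le_total x y with hxy | hyx
    · have : ¬ δ < x - y := by linarith
      simp [h, indicator_apply, abs_sub_comm x y, abs_of_nonneg (sub_nonneg.2 hxy), this]
    · have : ¬ δ < y - x := by linarith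
      simp [h, indicator_apply, abs_of_nonneg (sub_nonneg.2 hyx), this]
  have hmeas : MeasurableSet {y | δ < |x - y|} := measurableSet_lt measurable_const (by fun_prop)
  rw [← integrable_indicator_iff hmeas, ← integral_indicator hmeas, hsplit]
  refine ⟨(hh.comp_sub_right x).add (hh.comp_sub_left x), ?_⟩
  rw [integral_add (hh.comp_sub_right x) (hh.comp_sub_left x), integral_sub_right_eq_self,
    integral_sub_left_eq_self, integral_indicator measurableSet_Ioi, integral_Ioi_rpow_of_lt hp hδ]
  ring

lemma integral_truncated_fracMeanCurv_eq {p x δ : ℝ} {E : Set ℝ} (hE : MeasurableSet E)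
    (hp : p < -1) (hδ : 0 < δ) :
    ∫ y in {y : ℝ | δ < |x - y|},
        (Eᶜ.indicator (fun _ => (1 : ℝ)) y - E.indicator (fun _ => (1 : ℝ)) y) * |x - y| ^ p
      = -2 * δ ^ (p + 1) / (p + 1) - 2 * ∫ y in E ∩ {y | δ < |x - y|}, |x - y| ^ p := by
  obtain ⟨hint, hval⟩ := integrableOn_and_integral_abs_sub_rpow_of_lt_abs_sub (x := x) hp hδ
  have hpt : ∀ y, (Eᶜ.indicator (fun _ => (1 : ℝ)) y - E.indicator (fun _ => (1 : ℝ)) y)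
      * |x - y| ^ p = |x - y| ^ p - 2 * E.indicator (fun z => |x - z| ^ p) y := by
    intro y
    by_cases hy : y ∈ E
    · simp [hy]; ring
    · simp [hy]
  simp_rw [hpt]
  rw [integral_sub hint ((hint.indicator hE).const_mul 2), integral_const_mul,
    setIntegral_indicator hE, hval, inter_comm]

lemma isFracMeanCurv1_of_eventually_eq {s x C : ℝ} {E : Set ℝ} (hs : 0 < s)
    (hE : MeasurableSet E)
    (h : ∀ᶠ δ in 𝓝[>] 0,
      ∫ y in E ∩ {y | δ < |x - y|}, |x - y| ^ (-(1 + s)) = δ ^ (-s) / s - C) :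
    IsFracMeanCurv1 s E x (2 * C) := by
  refine tendsto_const_nhds.congr' ?_
  filter_upwards [h, self_mem_nhdsWithin] with δ hδ (hδ0 : 0 < δ)
  rw [integral_truncated_fracMeanCurv_eq hE (by linarith) hδ0, hδ,
    show -(1 + s) + 1 = -s by ring]
  field_simp
  ring

lemma integrableOn_and_integral_Ioo_abs_sub_rpow_of_le {q x a b : ℝ} (hxa : x ≤ a)
    (hab : a ≤ b) (hq : -1 < q ∨ q ≠ -1 ∧ x < a) :
    IntegrableOn (fun y => |x - y| ^ q) (Ioo a b) ∧
      ∫ y in Ioo a b, |x - y| ^ q = ((b - x) ^ (q + 1) - (a - x) ^ (q + 1)) / (q + 1) := by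
  have hq' : -1 < q ∨ q ≠ -1 ∧ (0 : ℝ) ∉ uIcc (a - x) (b - x) := by
    refine hq.imp_right fun h => ⟨h.1, fun h0 => ?_⟩
    rw [uIcc_of_le (by linarith)] at h0
    linarith [h0.1, h.2]
  have hii : IntervalIntegrable (fun t : ℝ => t ^ q) volume (a - x) (b - x) :=
    hq'.elim intervalIntegral.intervalIntegrable_rpow' fun h =>
      intervalIntegral.intervalIntegrable_rpow (Or.inr h.2)
  have heq : EqOn (fun y => |x - y| ^ q) (fun y => (y - x) ^ q) (Ioo a b) := fun y hy => by
    dsimp only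
    rw [abs_sub_comm, abs_of_nonneg (by linarith [hy.1])]
  refine ⟨?_, ?_⟩
  · have := (hii.comp_sub_right x).1.mono_set Ioo_subset_Ioc_self
    simp only [sub_add_cancel] at this
    exact this.congr_fun heq.symm measurableSet_Ioo
  · rw [setIntegral_congr_fun measurableSet_Ioo heq, ← integral_Ioc_eq_integral_Ioo,
      ← intervalIntegral.integral_of_le hab,
      intervalIntegral.integral_comp_sub_right (fun t => t ^ q), integral_rpow hq']

lemma integrableOn_and_integral_Ioo_abs_sub_rpow_of_ge {q x a b : ℝ} (hab : a ≤ b)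
    (hbx : b ≤ x) (hq : -1 < q ∨ q ≠ -1 ∧ b < x) :
    IntegrableOn (fun y => |x - y| ^ q) (Ioo a b) ∧
      ∫ y in Ioo a b, |x - y| ^ q = ((x - a) ^ (q + 1) - (x - b) ^ (q + 1)) / (q + 1) := by
  have hq' : -1 < q ∨ q ≠ -1 ∧ (0 : ℝ) ∉ uIcc (x - b) (x - a) := by
    refine hq.imp_right fun h => ⟨h.1, fun h0 => ?_⟩
    rw [uIcc_of_le (by linarith)] at h0
    linarith [h0.1, h.2]
  have hii : IntervalIntegrable (fun t : ℝ => t ^ q) volume (x - b) (x - a) :=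
    hq'.elim intervalIntegral.intervalIntegrable_rpow' fun h =>
      intervalIntegral.intervalIntegrable_rpow (Or.inr h.2)
  have heq : EqOn (fun y => |x - y| ^ q) (fun y => (x - y) ^ q) (Ioo a b) := fun y hy => by
    dsimp only
    rw [abs_of_nonneg (by linarith [hy.2])]
  refine ⟨?_, ?_⟩
  · have := (hii.symm.comp_sub_left x).1.mono_set Ioo_subset_Ioc_self
    simp only [sub_sub_cancel] at this
    exact this.congr_fun heq.symm measurableSet_Ioo
  · rw [setIntegral_congr_fun measurableSet_Ioo heq, ← integral_Ioc_eq_integral_Ioo,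
      ← intervalIntegral.integral_of_le hab,
      intervalIntegral.integral_comp_sub_left (fun t => t ^ q), integral_rpow hq']

lemma isFracMeanCurv1_Ioo_union_left {s a b r : ℝ} {F : Set ℝ} (hs : 0 < s) (hab : a < b)
    (hr : 0 < r) (hF : MeasurableSet F) (hFr : F ⊆ {y | r < |a - y|})
    (hdisj : Disjoint (Ioo a b) F) :
    IsFracMeanCurv1 s (Ioo a b ∪ F) a
      (2 * ((b - a) ^ (-s) / s - ∫ y in F, |a - y| ^ (-(1 + s)))) := by
  refine isFracMeanCurv1_of_eventually_eq hs (measurableSet_Ioo.union hF) ?_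
  filter_upwards [Ioo_mem_nhdsGT (lt_min hr (sub_pos.2 hab))] with δ ⟨hδ0, hδ⟩
  have hδr : δ < r := hδ.trans_le (min_le_left _ _)
  have hδb : a + δ < b := by linarith [min_le_right r (b - a)]
  have hset : (Ioo a b ∪ F) ∩ {y | δ < |a - y|} = Ioo (a + δ) b ∪ F := by
    ext y
    have := @hFr y
    simp only [mem_inter_iff, mem_union, mem_Ioo, mem_ofPred_eq] at this ⊢
    grind
  obtain ⟨hint, hval⟩ := integrableOn_and_integral_Ioo_abs_sub_rpow_of_le (q := -(1 + s))
    (x := a) (by linarith) hδb.le (Or.inr ⟨by linarith, by linarith⟩)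
  have hintF := (integrableOn_and_integral_abs_sub_rpow_of_lt_abs_sub (p := -(1 + s)) (x := a)
    (by linarith) hr).1.mono_set hFr
  rw [hset, setIntegral_union (hdisj.mono_left (Ioo_subset_Ioo_left (by linarith))) hF hint
    hintF, hval, show -(1 + s) + 1 = -s by ring, add_sub_cancel_left]
  field_simp
  ring

lemma isFracMeanCurv1_Ioo_union_right {s a b r : ℝ} {F : Set ℝ} (hs : 0 < s) (hab : a < b)
    (hr : 0 < r) (hF : MeasurableSet F) (hFr : F ⊆ {y | r < |b - y|})
    (hdisj : Disjoint (Ioo a b) F) :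
    IsFracMeanCurv1 s (Ioo a b ∪ F) b
      (2 * ((b - a) ^ (-s) / s - ∫ y in F, |b - y| ^ (-(1 + s)))) := by
  refine isFracMeanCurv1_of_eventually_eq hs (measurableSet_Ioo.union hF) ?_
  filter_upwards [Ioo_mem_nhdsGT (lt_min hr (sub_pos.2 hab))] with δ ⟨hδ0, hδ⟩
  have hδr : δ < r := hδ.trans_le (min_le_left _ _)
  have hδa : a < b - δ := by linarith [min_le_right r (b - a)]
  have hset : (Ioo a b ∪ F) ∩ {y | δ < |b - y|} = Ioo a (b - δ) ∪ F := by
    ext y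
    have := @hFr y
    simp only [mem_inter_iff, mem_union, mem_Ioo, mem_ofPred_eq] at this ⊢
    grind
  obtain ⟨hint, hval⟩ := integrableOn_and_integral_Ioo_abs_sub_rpow_of_ge (q := -(1 + s))
    (x := b) hδa.le (by linarith) (Or.inr ⟨by linarith, by linarith⟩)
  have hintF := (integrableOn_and_integral_abs_sub_rpow_of_lt_abs_sub (p := -(1 + s)) (x := b)
    (by linarith) hr).1.mono_set hFr
  rw [hset, setIntegral_union (hdisj.mono_left (Ioo_subset_Ioo_right (by linarith))) hF hint
    hintF, hval, show -(1 + s) + 1 = -s by ring, sub_sub_cancel]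
  field_simp
  ring

lemma rieszPot1_Ioo_union_left {α a b : ℝ} {F : Set ℝ} (hα : α < 1) (hab : a ≤ b)
    (hF : MeasurableSet F) (hdisj : Disjoint (Ioo a b) F)
    (hint : IntegrableOn (fun y => |a - y| ^ (-α)) F) :
    rieszPot1 α (Ioo a b ∪ F) a =
      (b - a) ^ (1 - α) / (1 - α) + ∫ y in F, |a - y| ^ (-α) := by
  obtain ⟨hI, hval⟩ := integrableOn_and_integral_Ioo_abs_sub_rpow_of_le (q := -α) le_rfl hab
    (Or.inl (by linarith))
  rw [rieszPot1, setIntegral_union hdisj hF hI hint, hval, sub_self,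
    Real.zero_rpow (by linarith), show -α + 1 = 1 - α by ring, sub_zero]

lemma rieszPot1_Ioo_union_right {α a b : ℝ} {F : Set ℝ} (hα : α < 1) (hab : a ≤ b)
    (hF : MeasurableSet F) (hdisj : Disjoint (Ioo a b) F)
    (hint : IntegrableOn (fun y => |b - y| ^ (-α)) F) :
    rieszPot1 α (Ioo a b ∪ F) b =
      (b - a) ^ (1 - α) / (1 - α) + ∫ y in F, |b - y| ^ (-α) := by
  obtain ⟨hI, hval⟩ := integrableOn_and_integral_Ioo_abs_sub_rpow_of_ge (q := -α) hab le_rfl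
    (Or.inl (by linarith))
  rw [rieszPot1, setIntegral_union hdisj hF hI hint, hval, sub_self,
    Real.zero_rpow (by linarith), show -α + 1 = 1 - α by ring, sub_zero]

lemma exists_second_difference_eq {f f' f'' : ℝ → ℝ} {x h : ℝ} (hh : 0 < h)
    (hf : ∀ t ∈ Icc (x - h) (x + h), HasDerivAt f (f' t) t)
    (hf' : ∀ t ∈ Icc (x - h) (x + h), HasDerivAt f' (f'' t) t) :
    ∃ η ∈ Ioo (x - h) (x + h), f (x + h) - 2 * f x + f (x - h) = h ^ 2 * f'' η := by
  -- the mean value theorem for `t ↦ f (t + h) - f t` on `[x - h, x]`, then for `f'`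
  obtain ⟨ξ, hξ, hξeq⟩ := exists_hasDerivAt_eq_slope (fun t => f (t + h) - f t)
    (fun t => f' (t + h) - f' t) (by linarith : x - h < x)
    (fun t ht => (((hf (t + h) ⟨by linarith [ht.1], by linarith [ht.2]⟩).comp_add_const t h).sub
      (hf t ⟨ht.1, by linarith [ht.2]⟩)).continuousAt.continuousWithinAt)
    (fun t ht => ((hf (t + h) ⟨by linarith [ht.1], by linarith [ht.2]⟩).comp_add_const t h).sub
      (hf t ⟨ht.1.le, by linarith [ht.2]⟩))
  obtain ⟨η, hη, hηeq⟩ := exists_hasDerivAt_eq_slope f' f'' (by linarith : ξ < ξ + h)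
    (fun t ht => (hf' t ⟨by linarith [hξ.1, ht.1], by linarith [hξ.2, ht.2]⟩).continuousAt
      |>.continuousWithinAt)
    (fun t ht => hf' t ⟨by linarith [hξ.1, ht.1], by linarith [hξ.2, ht.2]⟩)
  refine ⟨η, ⟨by linarith [hξ.1, hη.1], by linarith [hξ.2, hη.2]⟩, ?_⟩
  rw [sub_add_cancel, sub_sub_cancel] at hξeq
  rw [add_sub_cancel_left] at hηeq
  field_simp at hξeq hηeq
  linear_combination -hξeq - h * hηeq

def endpointPotential (s α c ε t : ℝ) : ℝ :=
  2 / s * t ^ (-s) + c * ε / (1 - α) * t ^ (1 - α)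

section endpointPotential

variable {s α c ε : ℝ}

lemma hasDerivAt_endpointPotential (hs : 0 < s) (hα : α < 1) {t : ℝ} (ht : 0 < t) :
    HasDerivAt (endpointPotential s α c ε)
      (c * ε * t ^ (-α) - 2 * t ^ (-(1 + s))) t := by
  have h1 := (Real.hasDerivAt_rpow_const (p := -s) (Or.inl ht.ne')).const_mul (2 / s)
  have h2 := (Real.hasDerivAt_rpow_const (p := 1 - α) (Or.inl ht.ne')).const_mul
    (c * ε / (1 - α))
  refine (h1.add h2).congr_deriv ?_
  have : 1 - α ≠ 0 := by linarith
  rw [show -s - 1 = -(1 + s) by ring, show 1 - α - 1 = -α by ring]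
  field_simp
  ring

lemma hasDerivAt_endpointPotential_deriv {t : ℝ} (ht : 0 < t) :
    HasDerivAt (fun u => c * ε * u ^ (-α) - 2 * u ^ (-(1 + s)))
      (t ^ (-(2 + s)) * (2 * (1 + s) - c * ε * α * t ^ (1 + s - α))) t := by
  have h1 := (Real.hasDerivAt_rpow_const (p := -α) (Or.inl ht.ne')).const_mul (c * ε)
  have h2 := (Real.hasDerivAt_rpow_const (p := -(1 + s)) (Or.inl ht.ne')).const_mul 2
  refine (h1.sub h2).congr_deriv ?_
  have hpow : t ^ (-(2 + s)) * t ^ (1 + s - α) = t ^ (-α - 1) := by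
    rw [← Real.rpow_add ht]; ring_nf
  rw [show -(1 + s) - 1 = -(2 + s) by ring, ← hpow]
  ring

lemma exists_endpointPotential_second_difference_eq (hs : 0 < s) (hα : α < 1) {d : ℝ}
    (hd : 1 / 2 < d) :
    ∃ η ∈ Ioo (d - 1 / 2) (d + 1 / 2),
      endpointPotential s α c ε (d + 1 / 2) - 2 * endpointPotential s α c ε d
        + endpointPotential s α c ε (d - 1 / 2)
        = η ^ (-(2 + s)) / 4 * (2 * (1 + s) - c * ε * α * η ^ (1 + s - α)) := by
  obtain ⟨η, hη, heq⟩ :=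
    exists_second_difference_eq (x := d) (by norm_num : (0 : ℝ) < 1 / 2)
      (fun t ht => hasDerivAt_endpointPotential hs hα (by linarith [ht.1]))
      (fun t ht => hasDerivAt_endpointPotential_deriv (by linarith [ht.1]))
  exact ⟨η, hη, by rw [heq]; ring⟩

lemma endpointPotential_second_difference_pos (hs : 0 < s) (hα0 : 0 < α) (hα1 : α < 1)
    (hc : 0 < c) (hε : 0 < ε) {d : ℝ} (hd : 1 / 2 < d)
    (h : c * ε * α * (d + 1 / 2) ^ (1 + s - α) ≤ 2 * (1 + s)) :
    0 < endpointPotential s α c ε (d + 1 / 2) - 2 * endpointPotential s α c ε d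
        + endpointPotential s α c ε (d - 1 / 2) := by
  obtain ⟨η, hη, heq⟩ :=
    exists_endpointPotential_second_difference_eq (c := c) (ε := ε) hs hα1 hd
  have hη0 : 0 < η := by linarith [hη.1]
  have hlt : η ^ (1 + s - α) < (d + 1 / 2) ^ (1 + s - α) :=
    Real.rpow_lt_rpow hη0.le hη.2 (by linarith)
  rw [heq]
  have : c * ε * α * η ^ (1 + s - α) < c * ε * α * (d + 1 / 2) ^ (1 + s - α) :=
    mul_lt_mul_of_pos_left hlt (by positivity)
  exact mul_pos (by positivity) (by linarith)

lemma endpointPotential_second_difference_neg (hs : 0 < s) (hα0 : 0 < α) (hα1 : α < 1)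
    (hc : 0 < c) (hε : 0 < ε) {d : ℝ} (hd : 1 / 2 < d)
    (h : 2 * (1 + s) ≤ c * ε * α * (d - 1 / 2) ^ (1 + s - α)) :
    endpointPotential s α c ε (d + 1 / 2) - 2 * endpointPotential s α c ε d
        + endpointPotential s α c ε (d - 1 / 2) < 0 := by
  obtain ⟨η, hη, heq⟩ :=
    exists_endpointPotential_second_difference_eq (c := c) (ε := ε) hs hα1 hd
  have hη0 : 0 < η := by linarith [hη.1]
  have hlt : (d - 1 / 2) ^ (1 + s - α) < η ^ (1 + s - α) :=
    Real.rpow_lt_rpow (by linarith) hη.1 (by linarith)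
  rw [heq]
  have : c * ε * α * (d - 1 / 2) ^ (1 + s - α) < c * ε * α * η ^ (1 + s - α) :=
    mul_lt_mul_of_pos_left hlt (by positivity)
  exact mul_neg_of_pos_of_neg (by positivity) (by linarith)

lemma continuousOn_endpointPotential_second_difference (hs : 0 < s) (hα : α < 1) :
    ContinuousOn (fun d => endpointPotential s α c ε (d + 1 / 2)
      - 2 * endpointPotential s α c ε d + endpointPotential s α c ε (d - 1 / 2))
      (Ioi (1 / 2)) := by
  have hΦ : ContinuousOn (endpointPotential s α c ε) (Ioi 0) := fun t ht =>
    (hasDerivAt_endpointPotential hs hα ht).continuousAt.continuousWithinAt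
  refine ((hΦ.comp (by fun_prop) ?_).sub (continuousOn_const.mul (hΦ.mono ?_))).add
    (hΦ.comp (by fun_prop) ?_)
  all_goals intro t ht; simp only [mem_Ioi] at ht ⊢; linarith

lemma exists_endpointPotential_second_difference_eq_zero (hs : 0 < s) (hα0 : 0 < α)
    (hα1 : α < 1) (hc : 0 < c) (hε : 0 < ε) (hεbar : ε < 2 * (1 + s) / (c * α)) :
    ∃ d, 1 / 2 < d ∧ endpointPotential s α c ε (d + 1 / 2) - 2 * endpointPotential s α c ε d
        + endpointPotential s α c ε (d - 1 / 2) = 0 ∧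
      (2 * (1 + s) / (c * α)) ^ (1 / (1 + s - α)) * ε ^ (-(1 / (1 + s - α))) ≤ d + 1 / 2 := by
  have hp : 0 < 1 + s - α := by linarith
  set t₀ := (2 * (1 + s) / (c * ε * α)) ^ (1 / (1 + s - α)) with ht₀
  have ht₀p : c * ε * α * t₀ ^ (1 + s - α) = 2 * (1 + s) := by
    rw [ht₀, ← Real.rpow_mul (by positivity), one_div_mul_cancel hp.ne', Real.rpow_one]
    field_simp
  have ht₀1 : 1 < t₀ := by
    refine Real.one_lt_rpow ?_ (by positivity)
    rw [lt_div_iff₀ (by positivity)]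
    rw [lt_div_iff₀ (by positivity)] at hεbar
    linarith
  obtain ⟨d, hd, hd0⟩ := intermediate_value_Icc' (by linarith : t₀ - 1 / 2 ≤ t₀ + 1 / 2)
    ((continuousOn_endpointPotential_second_difference hs hα1).mono fun t ht =>
      show 1 / 2 < t by linarith [ht.1])
    ⟨(endpointPotential_second_difference_neg hs hα0 hα1 hc hε (by linarith)
        (by rw [add_sub_cancel_right, ht₀p])).le,
      (endpointPotential_second_difference_pos hs hα0 hα1 hc hε (by linarith)
        (by rw [sub_add_cancel, ht₀p])).le⟩
  refine ⟨d, by linarith [hd.1], hd0, ?_⟩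
  have : (2 * (1 + s) / (c * α)) ^ (1 / (1 + s - α)) * ε ^ (-(1 / (1 + s - α))) = t₀ := by
    rw [Real.rpow_neg hε.le, ← Real.inv_rpow hε.le,
      ← Real.mul_rpow (by positivity) (by positivity), ht₀]
    congr 1
    field_simp
  linarith [hd.1]

end endpointPotential

section twoIntervals

variable {s α c ε d : ℝ}

lemma disjoint_Ioo_zero_half_Ioo (hd : 1 / 2 < d) :
    Disjoint (Ioo (0 : ℝ) (1 / 2)) (Ioo d (d + 1 / 2)) :=
  disjoint_left.2 fun _ h₁ h₂ => by linarith [h₁.2, h₂.1]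

lemma exists_fracMeanCurv_add_rieszPot1_outer (hs : 0 < s) (hα : α < 1) (hd : 1 / 2 < d) :
    ∀ x ∈ ({0, d + 1 / 2} : Set ℝ), ∃ κ,
      IsFracMeanCurv1 s (Ioo 0 (1 / 2) ∪ Ioo d (d + 1 / 2)) x κ ∧
      κ + c * ε * rieszPot1 α (Ioo 0 (1 / 2) ∪ Ioo d (d + 1 / 2)) x =
        endpointPotential s α c ε (1 / 2) + endpointPotential s α c ε (d + 1 / 2)
          - endpointPotential s α c ε d := by
  have hdisj := disjoint_Ioo_zero_half_Ioo hd
  have hα' : 1 - α ≠ 0 := by linarith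
  rintro x (rfl | rfl)
  · obtain ⟨-, hK⟩ :=
      integrableOn_and_integral_Ioo_abs_sub_rpow_of_le (q := -(1 + s)) (x := 0)
        (a := d) (b := d + 1 / 2) (by linarith) (by linarith) (Or.inr ⟨by linarith, by linarith⟩)
    obtain ⟨hIV, hV⟩ :=
      integrableOn_and_integral_Ioo_abs_sub_rpow_of_le (q := -α) (x := 0)
        (a := d) (b := d + 1 / 2) (by linarith) (by linarith) (Or.inl (by linarith))
    refine ⟨_, isFracMeanCurv1_Ioo_union_left hs (by norm_num) (by linarith : 0 < d)
      measurableSet_Ioo (fun y hy => show d < |0 - y| from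
        lt_abs.2 (Or.inr (by linarith [hy.1]))) hdisj, ?_⟩
    rw [rieszPot1_Ioo_union_left hα (by norm_num) measurableSet_Ioo hdisj hIV, hK, hV]
    simp only [endpointPotential, sub_zero, show -(1 + s) + 1 = -s by ring,
      show -α + 1 = 1 - α by ring]
    field_simp
    ring
  · obtain ⟨-, hK⟩ :=
      integrableOn_and_integral_Ioo_abs_sub_rpow_of_ge (q := -(1 + s)) (x := d + 1 / 2)
        (a := 0) (b := 1 / 2) (by norm_num) (by linarith) (Or.inr ⟨by linarith, by linarith⟩)
    obtain ⟨hIV, hV⟩ :=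
      integrableOn_and_integral_Ioo_abs_sub_rpow_of_ge (q := -α) (x := d + 1 / 2)
        (a := 0) (b := 1 / 2) (by norm_num) (by linarith) (Or.inl (by linarith))
    rw [union_comm]
    refine ⟨_, isFracMeanCurv1_Ioo_union_right hs (by linarith) (by linarith : 0 < d)
      measurableSet_Ioo (fun y hy => show d < |d + 1 / 2 - y| from
        lt_abs.2 (Or.inl (by linarith [hy.2]))) hdisj.symm, ?_⟩
    rw [rieszPot1_Ioo_union_right hα (by linarith) measurableSet_Ioo hdisj.symm hIV, hK, hV]
    simp only [endpointPotential, sub_zero, add_sub_cancel_left, add_sub_cancel_right,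
      show -(1 + s) + 1 = -s by ring, show -α + 1 = 1 - α by ring]
    field_simp
    ring

lemma exists_fracMeanCurv_add_rieszPot1_inner (hs : 0 < s) (hα : α < 1) (hd : 1 / 2 < d) :
    ∀ x ∈ ({1 / 2, d} : Set ℝ), ∃ κ,
      IsFracMeanCurv1 s (Ioo 0 (1 / 2) ∪ Ioo d (d + 1 / 2)) x κ ∧
      κ + c * ε * rieszPot1 α (Ioo 0 (1 / 2) ∪ Ioo d (d + 1 / 2)) x =
        endpointPotential s α c ε (1 / 2) + endpointPotential s α c ε d
          - endpointPotential s α c ε (d - 1 / 2) := by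
  have hdisj := disjoint_Ioo_zero_half_Ioo hd
  have hα' : 1 - α ≠ 0 := by linarith
  rintro x (rfl | hx)
  · obtain ⟨-, hK⟩ :=
      integrableOn_and_integral_Ioo_abs_sub_rpow_of_le (q := -(1 + s)) (x := 1 / 2)
        (a := d) (b := d + 1 / 2) (by linarith) (by linarith) (Or.inr ⟨by linarith, hd⟩)
    obtain ⟨hIV, hV⟩ :=
      integrableOn_and_integral_Ioo_abs_sub_rpow_of_le (q := -α) (x := 1 / 2)
        (a := d) (b := d + 1 / 2) (by linarith) (by linarith) (Or.inl (by linarith))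
    refine ⟨_, isFracMeanCurv1_Ioo_union_right hs (by norm_num) (by linarith : 0 < d - 1 / 2)
      measurableSet_Ioo (fun y hy => show d - 1 / 2 < |1 / 2 - y| from
        lt_abs.2 (Or.inr (by linarith [hy.1]))) hdisj, ?_⟩
    rw [rieszPot1_Ioo_union_right hα (by norm_num) measurableSet_Ioo hdisj hIV, hK, hV]
    simp only [endpointPotential, sub_zero, add_sub_cancel_right,
      show -(1 + s) + 1 = -s by ring, show -α + 1 = 1 - α by ring]
    field_simp
    ring
  · rw [show x = d from hx]
    obtain ⟨-, hK⟩ :=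
      integrableOn_and_integral_Ioo_abs_sub_rpow_of_ge (q := -(1 + s)) (x := d)
        (a := 0) (b := 1 / 2) (by norm_num) hd.le (Or.inr ⟨by linarith, hd⟩)
    obtain ⟨hIV, hV⟩ :=
      integrableOn_and_integral_Ioo_abs_sub_rpow_of_ge (q := -α) (x := d)
        (a := 0) (b := 1 / 2) (by norm_num) hd.le (Or.inl (by linarith))
    rw [union_comm]
    refine ⟨_, isFracMeanCurv1_Ioo_union_left hs (by linarith) (by linarith : 0 < d - 1 / 2)
      measurableSet_Ioo (fun y hy => show d - 1 / 2 < |d - y| from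
        lt_abs.2 (Or.inl (by linarith [hy.2]))) hdisj.symm, ?_⟩
    rw [rieszPot1_Ioo_union_left hα (by linarith) measurableSet_Ioo hdisj.symm hIV, hK, hV]
    simp only [endpointPotential, sub_zero, add_sub_cancel_left,
      show -(1 + s) + 1 = -s by ring, show -α + 1 = 1 - α by ring]
    field_simp
    ring

lemma eulerLagrange_Ioo_zero_half_union_Ioo (hs : 0 < s) (hα : α < 1) (hd : 1 / 2 < d)
    (hroot : endpointPotential s α c ε (d + 1 / 2) - 2 * endpointPotential s α c ε d
      + endpointPotential s α c ε (d - 1 / 2) = 0) :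
    ∃ lam, ∀ x ∈ ({0, 1 / 2, d, d + 1 / 2} : Set ℝ), ∃ κ,
      IsFracMeanCurv1 s (Ioo 0 (1 / 2) ∪ Ioo d (d + 1 / 2)) x κ ∧
      κ + c * ε * rieszPot1 α (Ioo 0 (1 / 2) ∪ Ioo d (d + 1 / 2)) x = lam := by
  have houter := exists_fracMeanCurv_add_rieszPot1_outer (c := c) (ε := ε) hs hα hd
  have hinner := exists_fracMeanCurv_add_rieszPot1_inner (c := c) (ε := ε) hs hα hd
  refine ⟨endpointPotential s α c ε (1 / 2) + endpointPotential s α c ε (d + 1 / 2)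
    - endpointPotential s α c ε d, fun x hx => ?_⟩
  rcases hx with hx | hx | hx | hx
  · exact houter x (Or.inl hx)
  · obtain ⟨κ, hκ, hval⟩ := hinner x (Or.inl hx)
    exact ⟨κ, hκ, by linear_combination hval - hroot⟩
  · obtain ⟨κ, hκ, hval⟩ := hinner x (Or.inr hx)
    exact ⟨κ, hκ, by linear_combination hval - hroot⟩
  · exact houter x (Or.inr hx)

lemma closure_Ioo_zero_half_union_Ioo :
    closure (Ioo (0 : ℝ) (1 / 2) ∪ Ioo d (d + 1 / 2)) =
      Icc 0 (1 / 2) ∪ Icc d (d + 1 / 2) := by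
  rw [closure_union, closure_Ioo (by norm_num), closure_Ioo (by linarith)]

lemma frontier_Ioo_zero_half_union_Ioo (hd : 1 / 2 < d) :
    frontier (Ioo (0 : ℝ) (1 / 2) ∪ Ioo d (d + 1 / 2)) = {0, 1 / 2, d, d + 1 / 2} := by
  rw [(isOpen_Ioo.union isOpen_Ioo).frontier_eq, closure_Ioo_zero_half_union_Ioo]
  ext y
  simp only [Set.mem_sdiff, mem_union, mem_Icc, mem_Ioo, mem_insert_iff, mem_singleton_iff]
  grind

lemma not_isPreconnected_Ioo_zero_half_union_Ioo (hd : 1 / 2 < d) :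
    ¬ IsPreconnected (Ioo (0 : ℝ) (1 / 2) ∪ Ioo d (d + 1 / 2)) := by
  intro h
  have hx : (1 / 4 : ℝ) ∈ Ioo (0 : ℝ) (1 / 2) ∪ Ioo d (d + 1 / 2) := Or.inl (by norm_num)
  have hy : d + 1 / 4 ∈ Ioo (0 : ℝ) (1 / 2) ∪ Ioo d (d + 1 / 2) :=
    Or.inr ⟨by linarith, by linarith⟩
  rcases h.ordConnected.out hx hy
    (show (1 / 2 : ℝ) ∈ Icc (1 / 4) (d + 1 / 4) from ⟨by norm_num, by linarith⟩) with h | h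
  · exact lt_irrefl _ h.2
  · exact hd.not_gt h.1

lemma diam_Ioo_zero_half_union_Ioo (hd : 1 / 2 < d) :
    diam (Ioo (0 : ℝ) (1 / 2) ∪ Ioo d (d + 1 / 2)) = d + 1 / 2 := by
  refine le_antisymm ?_ ?_
  · calc diam (Ioo (0 : ℝ) (1 / 2) ∪ Ioo d (d + 1 / 2))
        ≤ diam (Icc 0 (d + 1 / 2)) := diam_mono
          (union_subset (Ioo_subset_Icc_self.trans (Icc_subset_Icc le_rfl (by linarith)))
            (Ioo_subset_Icc_self.trans (Icc_subset_Icc (by linarith) le_rfl)))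
          (isBounded_Icc _ _)
      _ = d + 1 / 2 := by rw [Real.diam_Icc (by linarith), sub_zero]
  · rw [← diam_closure, closure_Ioo_zero_half_union_Ioo]
    calc d + 1 / 2 = dist (0 : ℝ) (d + 1 / 2) := by
          rw [Real.dist_eq, abs_sub_comm, sub_zero, abs_of_pos (by linarith)]
      _ ≤ diam (Icc (0 : ℝ) (1 / 2) ∪ Icc d (d + 1 / 2)) :=
          dist_le_diam_of_mem (isBounded_Icc _ _ |>.union (isBounded_Icc _ _))
            (Or.inl ⟨le_rfl, by norm_num⟩) (Or.inr ⟨by linarith, le_rfl⟩)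

end twoIntervals

theorem stmt2 (s α c : ℝ) (hs : s ∈ Ioo (0 : ℝ) 1) (hα : α ∈ Ioo (0 : ℝ) 1) (hc : 0 < c) :
    ∃ εbar : ℝ, 0 < εbar ∧ ∃ Co : ℝ, 0 < Co ∧
      ∀ ε ∈ Ioo (0 : ℝ) εbar, ∃ d : ℝ, 1 / 2 < d ∧
        (∃ lam : ℝ, ∀ x ∈ ({0, 1 / 2, d, d + 1 / 2} : Set ℝ), ∃ κ : ℝ,
            IsFracMeanCurv1 s (Ioo 0 (1 / 2) ∪ Ioo d (d + 1 / 2)) x κ ∧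
            κ + c * ε * rieszPot1 α (Ioo 0 (1 / 2) ∪ Ioo d (d + 1 / 2)) x = lam) ∧
        frontier (Ioo (0 : ℝ) (1 / 2) ∪ Ioo d (d + 1 / 2)) = {0, 1 / 2, d, d + 1 / 2} ∧
        ¬ IsPreconnected (Ioo (0 : ℝ) (1 / 2) ∪ Ioo d (d + 1 / 2)) ∧
        Metric.diam (Ioo (0 : ℝ) (1 / 2) ∪ Ioo d (d + 1 / 2)) = d + 1 / 2 ∧
        Co * ε ^ (-(1 / (1 + s - α))) ≤ d + 1 / 2 := by
  obtain ⟨hs0, -⟩ := hs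
  obtain ⟨hα0, hα1⟩ := hα
  refine ⟨2 * (1 + s) / (c * α), by positivity, (2 * (1 + s) / (c * α)) ^ (1 / (1 + s - α)),
    by positivity, fun ε ⟨hε, hεbar⟩ => ?_⟩
  obtain ⟨d, hd, hroot, hdiam⟩ :=
    exists_endpointPotential_second_difference_eq_zero hs0 hα0 hα1 hc hε hεbar
  exact ⟨d, hd, eulerLagrange_Ioo_zero_half_union_Ioo hs0 hα1 hd hroot,
    frontier_Ioo_zero_half_union_Ioo hd, not_isPreconnected_Ioo_zero_half_union_Ioo hd,
    diam_Ioo_zero_half_union_Ioo hd, hdiam⟩
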